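/- For each t ∈ ℝ, let 𝔫_t be the 13-dimensional nilpotent Lie algebra with basis X₁,…,X₇, Y₁,…,Y₅, Z and nonzero basis brackets (up to antisymmetry) [X₁,X₂]=X₃, [X₁,X₃]=X₄, [X₁,X₄]=X₅, [X₁,X₅]=X₆, [X₁,X₆]=X₇, [X₂,X₃]=X₅, [X₂,X₄]=X₆, [X₂,X₅]=tX₇, [X₃,X₄]=(1−t)X₇, [Y₁,Y₂]=Y₃, [Y₁,Y₃]=Y₄, [Y₁,Y₄]=Y₅, [Y₂,Y₃]=Y₅, [X₁,Y₁]=Z, [X₂,Y₂]=Z. Then: (a) for each t, the diagonal map D = Diag(1,2,3,4,5,6,7,−1,−2,−3,−4,−5,0) (with respect to the ordered basis X₁,…,X₇,Y₁,…,Y₅,Z) is a derivation of 𝔫_t; (b) if there exists a Lie algebra isomorphism φ : 𝔫_s → 𝔫_t, then s = t; in particular the algebras 𝔫_t are pairwise non-isomorphic. -/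

import Mathlib

open scoped BigOperators

namespace RNPaper

/-- Structure constants of a skew-symmetric algebra on `ℝⁿ`:
an element of `V = Λ²(ℝⁿ)*⊗ℝⁿ` written in the basis `μ_{ijk}`. -/
abbrev SC (n : ℕ) := Fin n → Fin n → Fin n → ℝ

variable {n : ℕ}

def IsAntisym (c : SC n) : Prop := ∀ i j k, c j i k = - c i j k

/-- The bilinear map `ℝⁿ×ℝⁿ→ℝⁿ` associated to the structure constants `c`. -/
def br (c : SC n) (x y : Fin n → ℝ) : Fin n → ℝ :=
  fun k => ∑ i, ∑ j, x i * y j * c i j k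

def IsJacobi (c : SC n) : Prop :=
  ∀ x y z : Fin n → ℝ,
    br c (br c x y) z + br c (br c y z) x + br c (br c z x) y = 0

def nest (c : SC n) (v : ℕ → (Fin n → ℝ)) : ℕ → (Fin n → ℝ)
  | 0 => v 0
  | k + 1 => br c (v (k + 1)) (nest c v k)

def IsNilpotentBracket (c : SC n) : Prop :=
  ∃ N : ℕ, ∀ v : ℕ → (Fin n → ℝ), nest c v N = 0

/-- `c` is the Lie bracket of a nilpotent Lie algebra. -/
def IsNilpotentLie (c : SC n) : Prop := IsAntisym c ∧ IsJacobi c ∧ IsNilpotentBracket c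

/-- `D` is a derivation of the algebra with structure constants `c`. -/
def IsDeriv (c : SC n) (D : Matrix (Fin n) (Fin n) ℝ) : Prop :=
  ∀ x y : Fin n → ℝ,
    D.mulVec (br c x y) = br c (D.mulVec x) y + br c x (D.mulVec y)

/-- The inner product on `V` making the basis `μ_{ijk}` (`i<j`) orthonormal. -/
def innerV (c d : SC n) : ℝ := ∑ i, ∑ j, ∑ k, if i < j then c i j k * d i j k else 0

/-- The inner product `⟨A,B⟩ = tr(ABᵀ)` on matrices. -/
def innerM (A B : Matrix (Fin n) (Fin n) ℝ) : ℝ := ∑ a, ∑ b, A a b * B a b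

/-- The `gl(n,ℝ)`-action `E·μ = Eμ(·,·) − μ(E·,·) − μ(·,E·)`. -/
def lieAct (E : Matrix (Fin n) (Fin n) ℝ) (c : SC n) : SC n :=
  fun i j k => (∑ l, E k l * c i j l) - (∑ p, E p i * c p j k) - (∑ p, E p j * c i p k)

/-- The `GL(n,ℝ)`-action `(g·μ)(v,w) = g μ(g⁻¹v, g⁻¹w)` in structure constants. -/
def glAct (g : GL (Fin n) ℝ) (c : SC n) : SC n :=
  fun i j k => ∑ p, ∑ q, ∑ l,
    ((g⁻¹ : GL (Fin n) ℝ) : Matrix (Fin n) (Fin n) ℝ) p i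
      * ((g⁻¹ : GL (Fin n) ℝ) : Matrix (Fin n) (Fin n) ℝ) q j
      * ((g : Matrix (Fin n) (Fin n) ℝ) k l) * c p q l

/-- `m` is the moment map: `⟨m(μ),E⟩ = |μ|⁻²⟨E·μ,μ⟩` for all symmetric `E` and `μ ≠ 0`,
with `m(μ)` a symmetric matrix. -/
def IsMomentMap (m : SC n → Matrix (Fin n) (Fin n) ℝ) : Prop :=
  ∀ c : SC n, c ≠ 0 →
    (m c).IsSymm ∧
      ∀ E : Matrix (Fin n) (Fin n) ℝ, E.IsSymm →
        innerM (m c) E = (innerV c c)⁻¹ * innerV (lieAct E c) c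

/-- The centralizer of `D` in `GL(n,ℝ)`. -/
def centralizerSet (D : Matrix (Fin n) (Fin n) ℝ) : Set (GL (Fin n) ℝ) :=
  {g | (g : Matrix (Fin n) (Fin n) ℝ) * D = D * (g : Matrix (Fin n) (Fin n) ℝ)}

lemma one_mem_centralizerSet (D : Matrix (Fin n) (Fin n) ℝ) :
    (1 : GL (Fin n) ℝ) ∈ centralizerSet D := by
  simp [centralizerSet]

/-- `G_D`: the identity component of the centralizer of `D` in `GL(n,ℝ)`. -/
def GD (D : Matrix (Fin n) (Fin n) ℝ) : Set (GL (Fin n) ℝ) :=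
  Subtype.val '' connectedComponent (⟨1, one_mem_centralizerSet D⟩ : centralizerSet D)

/-- The orbit of `c` under a set `S ⊆ GL(n,ℝ)`. -/
def orbitOf (S : Set (GL (Fin n) ℝ)) (c : SC n) : Set (SC n) :=
  (fun g => glAct g c) '' S

noncomputable def diagAct (d : Fin n → ℝ) (c : SC n) : SC n :=
  fun i j k => (d k / (d i * d j)) * c i j k

/-- The orbit `T·μ` of the subgroup of diagonal matrices with positive entries. -/
def Torbit (c : SC n) : Set (SC n) :=
  {x | ∃ d : Fin n → ℝ, (∀ i, 0 < d i) ∧ x = diagAct d c}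

/-- The weight `F_{ij}^k = E_kk − E_ii − E_jj`. -/
def Fwt (i j k : Fin n) : Matrix (Fin n) (Fin n) ℝ :=
  Matrix.single k k 1 - Matrix.single i i 1 - Matrix.single j j 1

/-- `CH_μ`: the convex hull of the weights of `μ`. -/
def CHmu (c : SC n) : Set (Matrix (Fin n) (Fin n) ℝ) :=
  convexHull ℝ {M | ∃ i j k : Fin n, i < j ∧ c i j k ≠ 0 ∧ M = Fwt i j k}

/-- The diagonal part of a matrix. -/
def diagPart (A : Matrix (Fin n) (Fin n) ℝ) : Matrix (Fin n) (Fin n) ℝ :=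
  Matrix.diagonal fun i => A i i

/-- Membership in `𝔱ⁿ_{>0}`, the diagonal matrices with positive diagonal entries. -/
def DiagPos (E : Matrix (Fin n) (Fin n) ℝ) : Prop :=
  ∃ d : Fin n → ℝ, (∀ i, 0 < d i) ∧ E = Matrix.diagonal d

/-- The basis is nice for the bracket `c`. -/
def IsNice (c : SC n) : Prop :=
  (∀ i j k l, c i j k ≠ 0 → c i j l ≠ 0 → k = l) ∧
  ∀ i j r s k, c i j k ≠ 0 → c r s k ≠ 0 →
    ({i, j} : Finset (Fin n)) = {r, s} ∨
      Disjoint ({i, j} : Finset (Fin n)) ({r, s} : Finset (Fin n))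

/-- `A` is diagonalizable over `ℝ`. -/
def IsDiagonalizableR {N : ℕ} (A : Matrix (Fin N) (Fin N) ℝ) : Prop :=
  ∃ g : GL (Fin N) ℝ, ∃ d : Fin N → ℝ,
    A = (g : Matrix (Fin N) (Fin N) ℝ) * Matrix.diagonal d
      * ((g⁻¹ : GL (Fin N) ℝ) : Matrix (Fin N) (Fin N) ℝ)

/-- `D` extended by zero to `𝔰_D = ℝf ⊕ 𝔫` (index `0` corresponds to `f`). -/
def Dext (D : Matrix (Fin n) (Fin n) ℝ) : Matrix (Fin (n + 1)) (Fin (n + 1)) ℝ :=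
  Matrix.of (Fin.cons (fun _ => (0 : ℝ)) (fun k => Fin.cons (0 : ℝ) (fun j => D k j)))

/-- The bracket of `𝔫` extended by zero to `𝔰_D = ℝf ⊕ 𝔫`. -/
def cext (c : SC n) : SC (n + 1) :=
  Fin.cons (fun _ _ => 0)
    (fun i => Fin.cons (fun _ => 0) (fun j => Fin.cons 0 (fun k => c i j k)))

/-- Structure constants of the solvable extension `𝔰_D = ℝf ⊕ 𝔫`, `[f,X] = D X`. -/
def solvSC (D : Matrix (Fin n) (Fin n) ℝ) (c : SC n) : SC (n + 1) :=
  fun i j k =>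
    (if i = 0 then Dext D k j else 0) - (if j = 0 then Dext D k i else 0) + cext c i j k

/-- The matrix of `ad X`. -/
def adM {N : ℕ} (γ : SC N) (X : Fin N → ℝ) : Matrix (Fin N) (Fin N) ℝ :=
  Matrix.of fun k j => ∑ i, X i * γ i j k

/-- The bilinear form with Gram matrix `P`. -/
def bip {N : ℕ} (P : Matrix (Fin N) (Fin N) ℝ) (x y : Fin N → ℝ) : ℝ :=
  dotProduct x (P.mulVec y)

/-- `⟨Ric X,Y⟩` computed via the orthonormal basis `u`:
`−½Σ⟨[X,uₐ],[Y,uₐ]⟩ + ¼ΣΣ⟨[uₐ,u_b],X⟩⟨[uₐ,u_b],Y⟩ − ½ tr(ad X ∘ ad Y)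
 − ½(⟨[H,X],Y⟩+⟨[H,Y],X⟩)`. -/
noncomputable def ricForm {N : ℕ} (γ : SC N) (P : Matrix (Fin N) (Fin N) ℝ)
    (u : Fin N → (Fin N → ℝ)) (H : Fin N → ℝ) (X Y : Fin N → ℝ) : ℝ :=
  -(1 / 2) * (∑ a, bip P (br γ X (u a)) (br γ Y (u a)))
    + (1 / 4) * (∑ a, ∑ b, bip P (br γ (u a) (u b)) X * bip P (br γ (u a) (u b)) Y)
    - (1 / 2) * Matrix.trace (adM γ X * adM γ Y)
    - (1 / 2) * (bip P (br γ H X) Y + bip P (br γ H Y) X)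

/-- `D` is a Ricci negative derivation of `𝔫`: the solvable extension `𝔰_D = ℝf ⊕ 𝔫`
admits an inner product (with Gram matrix `P`) such that `f ⟂ 𝔫`, `D` is symmetric,
and the Ricci operator is negative definite. -/
def IsRicciNegative (c : SC n) (D : Matrix (Fin n) (Fin n) ℝ) : Prop :=
  ∃ P : Matrix (Fin (n + 1)) (Fin (n + 1)) ℝ, P.PosDef ∧
    (∀ j : Fin n, P 0 j.succ = 0) ∧
    (Dext D).transpose * P = P * Dext D ∧
    ∃ u : Fin (n + 1) → (Fin (n + 1) → ℝ),
      (∀ a b, bip P (u a) (u b) = if a = b then 1 else 0) ∧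
      ∃ H : Fin (n + 1) → ℝ,
        (∀ X : Fin (n + 1) → ℝ, bip P H X = Matrix.trace (adM (solvSC D c) X)) ∧
        ∀ X : Fin (n + 1) → ℝ, X ≠ 0 → ricForm (solvSC D c) P u H X X < 0

/-- The bracket `[e_i,e_j] = v e_k` (and `[e_j,e_i] = −v e_k`) as an element of `V`. -/
def brk {N : ℕ} (i j k : Fin N) (v : ℝ) : SC N :=
  fun p q r =>
    if p = i ∧ q = j ∧ r = k then v else if p = j ∧ q = i ∧ r = k then -v else 0


/-- Proposition 4.3 (iii): the family `𝔫_t`; basis `X₁,…,X₇ = e₀,…,e₆`,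
`Y₁,…,Y₅ = e₇,…,e₁₁`, `Z = e₁₂`. -/
noncomputable def c17 (t : ℝ) : SC 13 :=
  brk 0 1 2 1 + brk 0 2 3 1 + brk 0 3 4 1 + brk 0 4 5 1 + brk 0 5 6 1 +
    brk 1 2 4 1 + brk 1 3 5 1 + brk 1 4 6 t + brk 2 3 6 (1 - t) +
    brk 7 8 9 1 + brk 7 9 10 1 + brk 7 10 11 1 + brk 8 9 11 1 +
    brk 0 7 12 1 + brk 1 8 12 1

noncomputable def D17 : Matrix (Fin 13) (Fin 13) ℝ :=
  Matrix.diagonal ![1, 2, 3, 4, 5, 6, 7, -1, -2, -3, -4, -5, 0]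

/-!
(a) `D` is diagonal with weights `d`, and every basis bracket `[e_i, e_j] ∝ e_k` of `𝔫_t`
satisfies `d_k = d_i + d_j`.

(b) In `𝔫_s` the pair `(a, b) = (X₁, X₂)` satisfies `[b, [a, b]] = (ad a)³ b` and
`[b, (ad a)³ b] = s · (ad a)⁵ b ≠ 0`, and an isomorphism `𝔫_s → 𝔫_t` carries it to a pair in
`𝔫_t` with the same relations. Conversely, writing `aᵢ, bᵢ` for the `Xᵢ`-coordinates of
any `a, b ∈ 𝔫_t`, one computes `(ad a)⁵ b = a₁⁴ (a₁ b₂ - a₂ b₁) X₇`, so `a₁ ≠ 0` and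
`a₁ b₂ - a₂ b₁ ≠ 0`; the `X₄`- and `X₅`-coordinates of the first relation then force
`b₁ = 0` and `b₂ = a₁²`, and the `X₇`-coordinate of the second relation becomes
`t a₁⁵ b₂ = s a₁⁵ b₂`.
-/

open Matrix

variable {m : ℕ}

lemma br_add (c d : SC n) (x y : Fin n → ℝ) : br (c + d) x y = br c x y + br d x y := by
  ext k
  simp only [br, Pi.add_apply, mul_add, Finset.sum_add_distrib]

lemma br_brk {i j : Fin n} (hij : i ≠ j) (k : Fin n) (v : ℝ) (x y : Fin n → ℝ) :
    br (brk i j k v) x y = Pi.single k (v * (x i * y j - x j * y i)) := by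
  ext r
  rcases eq_or_ne r k with rfl | hr
  · have hterm : ∀ p q, brk i j r v p q r =
        v * ((Pi.single i 1 : Fin n → ℝ) p * (Pi.single j 1 : Fin n → ℝ) q
          - (Pi.single j 1 : Fin n → ℝ) p * (Pi.single i 1 : Fin n → ℝ) q) := by
      intro p q
      by_cases hp : p = i <;> by_cases hq : q = j <;> by_cases hp' : p = j <;>
        by_cases hq' : q = i <;> simp_all [brk]
    simp [br, hterm, mul_sub, Finset.sum_sub_distrib, Pi.single_apply]
    ring
  · simp [br, brk, hr]

lemma IsDeriv.add {c d : SC n} {D : Matrix (Fin n) (Fin n) ℝ} (hc : IsDeriv c D)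
    (hd : IsDeriv d D) : IsDeriv (c + d) D := by
  intro x y
  simp only [br_add, mulVec_add, hc x y, hd x y]
  abel

lemma isDeriv_brk_diagonal {i j : Fin n} (hij : i ≠ j) (k : Fin n) (v : ℝ) {d : Fin n → ℝ}
    (hd : d k = d i + d j) : IsDeriv (brk i j k v) (diagonal d) := by
  intro x y
  ext r
  simp only [br_brk hij, mulVec_diagonal, Pi.add_apply]
  rcases eq_or_ne r k with rfl | hr
  · simp only [Pi.single_eq_same, hd]
    ring
  · simp [hr]

lemma isDeriv_c17_D17 (t : ℝ) : IsDeriv (c17 t) D17 := by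
  unfold c17 D17
  iterate 14
    refine IsDeriv.add ?_ (isDeriv_brk_diagonal (by decide) _ _ (by simp only [cons_val]; norm_num))
  exact isDeriv_brk_diagonal (by decide) _ _ (by simp only [cons_val]; norm_num)

lemma br_c17 (t : ℝ) (x y : Fin 13 → ℝ) : br (c17 t) x y =
    Pi.single 2 (x 0 * y 1 - x 1 * y 0) + Pi.single 3 (x 0 * y 2 - x 2 * y 0) +
    Pi.single 4 (x 0 * y 3 - x 3 * y 0) + Pi.single 5 (x 0 * y 4 - x 4 * y 0) +
    Pi.single 6 (x 0 * y 5 - x 5 * y 0) + Pi.single 4 (x 1 * y 2 - x 2 * y 1) +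
    Pi.single 5 (x 1 * y 3 - x 3 * y 1) + Pi.single 6 (t * (x 1 * y 4 - x 4 * y 1)) +
    Pi.single 6 ((1 - t) * (x 2 * y 3 - x 3 * y 2)) +
    Pi.single 9 (x 7 * y 8 - x 8 * y 7) + Pi.single 10 (x 7 * y 9 - x 9 * y 7) +
    Pi.single 11 (x 7 * y 10 - x 10 * y 7) + Pi.single 11 (x 8 * y 9 - x 9 * y 8) +
    Pi.single 12 (x 0 * y 7 - x 7 * y 0) + Pi.single 12 (x 1 * y 8 - x 8 * y 1) := by
  simp only [c17, br_add, br_brk, ne_eq, Fin.reduceEq, not_false_eq_true, one_mul]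

lemma iterate_br_c17_five (t : ℝ) (a b : Fin 13 → ℝ) :
    (br (c17 t) a)^[5] b = Pi.single 6 (a 0 ^ 4 * (a 0 * b 1 - a 1 * b 0)) := by
  ext r
  fin_cases r <;> (simp [Function.iterate_succ_apply', br_c17]; try ring)

def RealizesParameter (c : SC n) (s : ℝ) (a b : Fin n → ℝ) : Prop :=
  br c b (br c a b) = (br c a)^[3] b ∧
    br c b ((br c a)^[3] b) = s • (br c a)^[5] b ∧
    (br c a)^[5] b ≠ 0

lemma realizesParameter_c17 (s : ℝ) :
    RealizesParameter (c17 s) s (Pi.single 0 1) (Pi.single 1 1) := by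
  refine ⟨?_, ?_, ?_⟩
  · ext r
    fin_cases r <;> simp [Function.iterate_succ_apply', br_c17]
  · ext r
    fin_cases r <;> simp [Function.iterate_succ_apply', br_c17]
  · simp [iterate_br_c17_five]

lemma mulVec_iterate_br {c : SC m} {c' : SC n} {M : Matrix (Fin n) (Fin m) ℝ}
    (hM : ∀ x y, M *ᵥ br c x y = br c' (M *ᵥ x) (M *ᵥ y)) (k : ℕ) (x y : Fin m → ℝ) :
    M *ᵥ (br c x)^[k] y = (br c' (M *ᵥ x))^[k] (M *ᵥ y) := by
  induction k with
  | zero => rfl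
  | succ k ih => rw [Function.iterate_succ_apply', Function.iterate_succ_apply', hM, ih]

lemma RealizesParameter.map {c : SC m} {c' : SC n} {s : ℝ} {a b : Fin m → ℝ}
    {M : Matrix (Fin n) (Fin m) ℝ} (hM : ∀ x y, M *ᵥ br c x y = br c' (M *ᵥ x) (M *ᵥ y))
    (hinj : Function.Injective M.mulVec) (h : RealizesParameter c s a b) :
    RealizesParameter c' s (M *ᵥ a) (M *ᵥ b) := by
  obtain ⟨h₁, h₂, hne⟩ := h
  refine ⟨?_, ?_, ?_⟩
  · rw [← mulVec_iterate_br hM, ← hM, ← hM, h₁]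
  · rw [← mulVec_iterate_br hM, ← mulVec_iterate_br hM, ← hM, h₂, mulVec_smul]
  · rw [← mulVec_iterate_br hM, Ne, ← mulVec_zero M]
    exact hinj.ne hne

lemma RealizesParameter.eq {s t : ℝ} {a b : Fin 13 → ℝ}
    (h : RealizesParameter (c17 t) s a b) : s = t := by
  obtain ⟨h₁, h₂, hne⟩ := h
  rw [iterate_br_c17_five, Ne, Pi.single_eq_zero_iff, mul_eq_zero, not_or] at hne
  obtain ⟨ha, hp⟩ := hne
  have hb₀ : b 0 = 0 := by
    simpa [Function.iterate_succ_apply', br_c17, hp] using congrFun h₁ 3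
  have hp' : a 0 * b 1 ≠ 0 := by simpa [hb₀] using hp
  have h₄ : b 1 * (a 0 * b 1) = a 0 ^ 2 * (a 0 * b 1) := by
    have := congrFun h₁ 4
    simp [Function.iterate_succ_apply', br_c17, hb₀] at this
    linear_combination this
  have hb₁ : b 1 = a 0 ^ 2 := mul_right_cancel₀ hp' h₄
  have h₆ : t * b 1 * a 0 ^ 3 * b 1 = s * a 0 ^ 5 * b 1 := by
    have := congrFun h₂ 6
    simp [Function.iterate_succ_apply', br_c17, hb₀] at this
    linear_combination this
  have hst : (s - t) * (a 0 ^ 4 * (a 0 * b 1)) = 0 := by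
    linear_combination t * a 0 ^ 3 * b 1 * hb₁ - h₆
  exact sub_eq_zero.mp ((mul_eq_zero.mp hst).resolve_right (mul_ne_zero ha hp'))

theorem statement17 :
    (∀ t : ℝ, IsDeriv (c17 t) D17) ∧
    ∀ s t : ℝ,
      (∃ g : GL (Fin 13) ℝ, ∀ x y : Fin 13 → ℝ,
        (g : Matrix (Fin 13) (Fin 13) ℝ).mulVec (br (c17 s) x y) =
          br (c17 t) ((g : Matrix (Fin 13) (Fin 13) ℝ).mulVec x)
            ((g : Matrix (Fin 13) (Fin 13) ℝ).mulVec y)) → s = t := by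
  refine ⟨isDeriv_c17_D17, fun s t ⟨g, hg⟩ => ?_⟩
  have hinj : Function.Injective (g : Matrix (Fin 13) (Fin 13) ℝ).mulVec :=
    mulVec_injective_iff_isUnit.mpr g.isUnit
  exact ((realizesParameter_c17 s).map hg hinj).eq

end RNPaper
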